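/- arXiv:1703.10243 — 4 statements merged into one kernel-verified Lean document; each statement's English description precedes it below -/
import Mathlib

section
/- Let E be a real inner product space, V : E → ℝ a C¹ function with gradient ∇V, and y, z ∈ E. Over the class of C¹ paths q : [0,1] → E with q(0) = y, q(1) = z, define A_oc(q) = ∫₀¹ (1/2)‖q'(t) + ∇V(q(t))‖² dt, A_oc*(q) = ∫₀¹ (1/2)‖q'(t) − ∇V(q(t))‖² dt and A_m(q) = ∫₀¹ ((1/2)‖q'(t)‖² + (1/2)‖∇V(q(t))‖²) dt. Then inf A_oc = inf A_m + (V(z) − V(y)), inf A_oc* = inf A_m − (V(z) − V(y)), and consequently inf A_oc − inf A_oc* = 2 (V(z) − V(y)), where all infima are taken over the stated class of paths (and are real numbers, the actions being bounded below for fixed y, z when the infimum of A_m is finite). -/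
/-! Along a C¹ path, `½‖q' ± ∇V(q)‖² = ½‖q'‖² + ½‖∇V(q)‖² ± ⟪q', ∇V(q)⟫`, and the cross term is
the derivative of `V ∘ q`, so it integrates to `±(V z - V y)` whatever the path. Each control action
is therefore the mechanical action shifted by a constant, and the infima shift by the same constant;
the backward case is the forward one for the potential `-V`. -/

open intervalIntegral

section GradientAction

variable {E : Type*} [NormedAddCommGroup E] [InnerProductSpace ℝ E]

def actionValues (L : E → E → ℝ) (y z : E) : Set ℝ :=
  {r | ∃ q : ℝ → E, ContDiff ℝ 1 q ∧ q 0 = y ∧ q 1 = z ∧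
    r = ∫ t in (0:ℝ)..1, L (q t) (deriv q t)}

theorem actionValues_nonempty (L : E → E → ℝ) (y z : E) : (actionValues L y z).Nonempty :=
  ⟨_, fun t => y + t • (z - y), contDiff_const.add (contDiff_id.smul contDiff_const),
    by simp, by simp, rfl⟩

theorem bddBelow_actionValues {L : E → E → ℝ} (hL : ∀ x v, 0 ≤ L x v) (y z : E) :
    BddBelow (actionValues L y z) := by
  refine ⟨0, ?_⟩
  rintro r ⟨q, -, -, -, rfl⟩
  exact integral_nonneg zero_le_one fun t _ => hL _ _

theorem actionValues_eq_image_add_const {L₁ L₂ : E → E → ℝ} {y z : E} {c : ℝ}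
    (h : ∀ q : ℝ → E, ContDiff ℝ 1 q → q 0 = y → q 1 = z →
      ∫ t in (0:ℝ)..1, L₁ (q t) (deriv q t) = (∫ t in (0:ℝ)..1, L₂ (q t) (deriv q t)) + c) :
    actionValues L₁ y z = (· + c) '' actionValues L₂ y z := by
  ext r
  constructor
  · rintro ⟨q, hq, h0, h1, rfl⟩
    exact ⟨_, ⟨q, hq, h0, h1, rfl⟩, (h q hq h0 h1).symm⟩
  · rintro ⟨_, ⟨q, hq, h0, h1, rfl⟩, rfl⟩
    exact ⟨q, hq, h0, h1, (h q hq h0 h1).symm⟩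

theorem sInf_actionValues_eq_add_const {L₁ L₂ : E → E → ℝ} {y z : E} {c : ℝ}
    (hL₂ : ∀ x v, 0 ≤ L₂ x v)
    (h : ∀ q : ℝ → E, ContDiff ℝ 1 q → q 0 = y → q 1 = z →
      ∫ t in (0:ℝ)..1, L₁ (q t) (deriv q t) = (∫ t in (0:ℝ)..1, L₂ (q t) (deriv q t)) + c) :
    sInf (actionValues L₁ y z) = sInf (actionValues L₂ y z) + c := by
  rw [actionValues_eq_image_add_const h]
  exact ((OrderIso.addRight c).map_csInf' (actionValues_nonempty L₂ y z)
    (bddBelow_actionValues hL₂ y z)).symm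

variable {V : E → ℝ} {gradV : E → E}

theorem continuous_of_hasFDerivAt_innerSL (hV : ContDiff ℝ 1 V)
    (hgrad : ∀ x, HasFDerivAt V (innerSL ℝ (gradV x)) x) : Continuous gradV := by
  have hfderiv : Continuous fun x => innerSL ℝ (gradV x) := by
    simpa only [funext fun x => (hgrad x).fderiv] using hV.continuous_fderiv one_ne_zero
  exact (InnerProductSpace.toDualMap ℝ E).isometry.isEmbedding.continuous_iff.mpr hfderiv

theorem integral_inner_deriv_gradient (hgrad : ∀ x, HasFDerivAt V (innerSL ℝ (gradV x)) x)
    (hgc : Continuous gradV) {q : ℝ → E} (hq : ContDiff ℝ 1 q) (a b : ℝ) :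
    ∫ t in a..b, inner ℝ (deriv q t) (gradV (q t)) = V (q b) - V (q a) := by
  have hderiv (t : ℝ) : HasDerivAt (V ∘ q) (inner ℝ (deriv q t) (gradV (q t))) t := by
    simpa [real_inner_comm] using
      (hgrad (q t)).comp_hasDerivAt t ((hq.differentiable one_ne_zero) t).hasDerivAt
  exact integral_eq_sub_of_hasDerivAt (fun t _ => hderiv t)
    (((hq.continuous_deriv le_rfl).inner (hgc.comp hq.continuous)).intervalIntegrable a b)

theorem integral_half_norm_add_gradient_sq (hgrad : ∀ x, HasFDerivAt V (innerSL ℝ (gradV x)) x)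
    (hgc : Continuous gradV) {q : ℝ → E} (hq : ContDiff ℝ 1 q) (a b : ℝ) :
    ∫ t in a..b, (1/2) * ‖deriv q t + gradV (q t)‖^2
      = (∫ t in a..b, ((1/2) * ‖deriv q t‖^2 + (1/2) * ‖gradV (q t)‖^2))
        + (V (q b) - V (q a)) := by
  have hq' : Continuous (deriv q) := hq.continuous_deriv le_rfl
  have hgq : Continuous fun t => gradV (q t) := hgc.comp hq.continuous
  calc ∫ t in a..b, (1/2) * ‖deriv q t + gradV (q t)‖^2
      = ∫ t in a..b, (((1/2) * ‖deriv q t‖^2 + (1/2) * ‖gradV (q t)‖^2)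
          + inner ℝ (deriv q t) (gradV (q t))) := by
        congr 1 with t
        rw [norm_add_sq_real]
        ring
    _ = (∫ t in a..b, ((1/2) * ‖deriv q t‖^2 + (1/2) * ‖gradV (q t)‖^2))
          + ∫ t in a..b, inner ℝ (deriv q t) (gradV (q t)) :=
        integral_add ((by fun_prop : Continuous _).intervalIntegrable a b)
          ((hq'.inner hgq).intervalIntegrable a b)
    _ = _ := by rw [integral_inner_deriv_gradient hgrad hgc hq]

theorem sInf_actionValues_half_norm_add_gradient_sq (hV : ContDiff ℝ 1 V)
    (hgrad : ∀ x, HasFDerivAt V (innerSL ℝ (gradV x)) x) (y z : E) :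
    sInf (actionValues (fun x v => (1/2) * ‖v + gradV x‖^2) y z)
      = sInf (actionValues (fun x v => (1/2) * ‖v‖^2 + (1/2) * ‖gradV x‖^2) y z)
        + (V z - V y) := by
  have hgc := continuous_of_hasFDerivAt_innerSL hV hgrad
  refine sInf_actionValues_eq_add_const (fun x v => by positivity) fun q hq h0 h1 => ?_
  rw [integral_half_norm_add_gradient_sq hgrad hgc hq, h0, h1]

end GradientAction

/-- Over C¹ paths from `y` to `z`,
`inf A_oc = inf A_m + (V z − V y)`, `inf A_oc* = inf A_m − (V z − V y)`, and
`inf A_oc − inf A_oc* = 2 (V z − V y)`. -/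
theorem stmt3 {E : Type*} [NormedAddCommGroup E] [InnerProductSpace ℝ E]
    (V : E → ℝ) (hV : ContDiff ℝ 1 V)
    (gradV : E → E) (hgrad : ∀ x, HasFDerivAt V (innerSL ℝ (gradV x)) x)
    (y z : E) :
    sInf {r : ℝ | ∃ q : ℝ → E, ContDiff ℝ 1 q ∧ q 0 = y ∧ q 1 = z ∧
        r = ∫ t in (0:ℝ)..1, (1/2) * ‖deriv q t + gradV (q t)‖^2}
      = sInf {r : ℝ | ∃ q : ℝ → E, ContDiff ℝ 1 q ∧ q 0 = y ∧ q 1 = z ∧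
        r = ∫ t in (0:ℝ)..1, ((1/2) * ‖deriv q t‖^2 + (1/2) * ‖gradV (q t)‖^2)}
        + (V z - V y)
    ∧ sInf {r : ℝ | ∃ q : ℝ → E, ContDiff ℝ 1 q ∧ q 0 = y ∧ q 1 = z ∧
        r = ∫ t in (0:ℝ)..1, (1/2) * ‖deriv q t - gradV (q t)‖^2}
      = sInf {r : ℝ | ∃ q : ℝ → E, ContDiff ℝ 1 q ∧ q 0 = y ∧ q 1 = z ∧
        r = ∫ t in (0:ℝ)..1, ((1/2) * ‖deriv q t‖^2 + (1/2) * ‖gradV (q t)‖^2)}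
        - (V z - V y)
    ∧ sInf {r : ℝ | ∃ q : ℝ → E, ContDiff ℝ 1 q ∧ q 0 = y ∧ q 1 = z ∧
        r = ∫ t in (0:ℝ)..1, (1/2) * ‖deriv q t + gradV (q t)‖^2}
      - sInf {r : ℝ | ∃ q : ℝ → E, ContDiff ℝ 1 q ∧ q 0 = y ∧ q 1 = z ∧
        r = ∫ t in (0:ℝ)..1, (1/2) * ‖deriv q t - gradV (q t)‖^2}
      = 2 * (V z - V y) := by
  have hforward := sInf_actionValues_half_norm_add_gradient_sq hV hgrad y z
  have hbackward := sInf_actionValues_half_norm_add_gradient_sq (V := -V) (gradV := -gradV) hV.neg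
    (fun x => by simpa only [Pi.neg_apply, map_neg] using (hgrad x).neg) y z
  simp only [Pi.neg_apply, ← sub_eq_add_neg, norm_neg] at hbackward
  unfold actionValues at hforward hbackward
  refine ⟨hforward, by rw [hbackward]; ring, by rw [hforward, hbackward]; ring⟩
end

section
/- (Geometric Hopf–Cole, backward part.) Let n ≥ 1, let G : ℝⁿ → Matrix (Fin n) (Fin n) ℝ be a C¹ map with G(x) symmetric for all x, and let V : ℝⁿ → ℝ be C². Assume: (A1) there are real constants c(i,j,k) such that ∂ᵢG^{jk}(x) = c(i,j,k) for all x; (A2) there are real constants d(i,k) such that ∂ᵢ(Σⱼ G^{jk} ∂ⱼV)(x) = d(i,k) for all x; and the Hessian matrix (∂²ᵢⱼV(x))ᵢⱼ is injective at every x. Let φ* : ℝ → ℝⁿ be differentiable and satisfy φ*'ᵢ(t) + (1/2) Σ_{j,k} c(i,j,k) φ*ⱼ(t) φ*ₖ(t) = − Σₖ d(i,k) φ*ₖ(t) for all i and t, and let η* : ℝ → ℝⁿ be differentiable with 2 ∂ᵢV(η*(t)) = −φ*ᵢ(t) for all i and t. Then η* is a backward gradient flow of V: η*'ʲ(t) =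 − Σₖ G^{jk}(η*(t)) ∂ₖV(η*(t)) for all j and t. -/
/-- Partial derivative of `F : ℝⁿ → ℝ` in the `i`-th coordinate direction. -/
noncomputable def pd {n : ℕ} (F : (Fin n → ℝ) → ℝ) (i : Fin n) (x : Fin n → ℝ) : ℝ :=
  fderiv ℝ F x (Pi.single i 1)

/-!
Write `x = η*(t)`, `w = ∇V(x)` and `H` for the Hessian of `V` at `x`. The Hopf–Cole relation
gives `φ* = -2 ∇V(η*)`, so by the chain rule and symmetry of `H`, `φ*' = -2 H η*'`. By (A1),
(A2) and the product rule, `d(i,k) = Σⱼ c(i,j,k) wⱼ + Σⱼ G^{jk}(x) Hᵢⱼ`. Substituting both into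
the ODE for `φ*`, the `c`-terms cancel and what remains is `H η*' = H (-G w)`; injectivity of `H`
gives `η*' = -G w`.
-/

open Finset

section PartialDerivatives

variable {n : ℕ}

lemma fderiv_apply_eq_sum_pd (F : (Fin n → ℝ) → ℝ) (x v : Fin n → ℝ) :
    fderiv ℝ F x v = ∑ j, v j * pd F j x := by
  conv_lhs => rw [pi_eq_sum_univ' v, map_sum]
  simp [pd]

lemma HasDerivAt.pd_comp {F : (Fin n → ℝ) → ℝ} {γ : ℝ → Fin n → ℝ} {γ' : Fin n → ℝ} {t : ℝ}
    (hF : DifferentiableAt ℝ F (γ t)) (hγ : HasDerivAt γ γ' t) :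
    HasDerivAt (fun s => F (γ s)) (∑ j, γ' j * pd F j (γ t)) t := by
  rw [← fderiv_apply_eq_sum_pd]
  exact hF.hasFDerivAt.comp_hasDerivAt t hγ

lemma ContDiff.pd {m : ℕ} {F : (Fin n → ℝ) → ℝ} (hF : ContDiff ℝ (m + 1) F) (i : Fin n) :
    ContDiff ℝ m (pd F i) :=
  (hF.fderiv_right le_rfl).clm_apply contDiff_const

lemma pd_pd_eq_fderiv_fderiv {F : (Fin n → ℝ) → ℝ} {x : Fin n → ℝ}
    (hF : DifferentiableAt ℝ (fderiv ℝ F) x) (i j : Fin n) :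
    pd (pd F j) i x = fderiv ℝ (fderiv ℝ F) x (Pi.single i 1) (Pi.single j 1) := by
  rw [pd, show pd F j = fun y => fderiv ℝ F y (Pi.single j 1) from rfl,
    fderiv_clm_apply hF (differentiableAt_const _)]
  simp

lemma pd_pd_comm {F : (Fin n → ℝ) → ℝ} (hF : ContDiff ℝ 2 F) (x : Fin n → ℝ) (i j : Fin n) :
    pd (pd F j) i x = pd (pd F i) j x := by
  have hF' : DifferentiableAt ℝ (fderiv ℝ F) x :=
    (hF.fderiv_right le_rfl).differentiable one_ne_zero x
  rw [pd_pd_eq_fderiv_fderiv hF', pd_pd_eq_fderiv_fderiv hF',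
    hF.contDiffAt.isSymmSndFDerivAt (by simp)]

lemma pd_sum_mul {f g : Fin n → (Fin n → ℝ) → ℝ} {x : Fin n → ℝ}
    (hf : ∀ j, DifferentiableAt ℝ (f j) x) (hg : ∀ j, DifferentiableAt ℝ (g j) x) (i : Fin n) :
    pd (fun y => ∑ j, f j y * g j y) i x =
      ∑ j, (pd (f j) i x * g j x + f j x * pd (g j) i x) := by
  have hsum := HasFDerivAt.fun_sum (u := univ) fun j _ =>
    (hf j).hasFDerivAt.fun_mul (hg j).hasFDerivAt
  rw [pd, hsum.fderiv]
  simp [pd, add_comm, mul_comm]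

end PartialDerivatives

lemma sum_mul_eq_sum_mul_neg_sum_of_riccati {n : ℕ} (c : Fin n → Fin n → Fin n → ℝ)
    (d H G : Fin n → Fin n → ℝ) (w v : Fin n → ℝ) (i : Fin n)
    (hd : ∀ k, d i k = ∑ j, (c i j k * w j + G j k * H i j))
    (hode : -2 * ∑ j, H i j * v j + (1/2) * ∑ j, ∑ k, c i j k * (-2 * w j) * (-2 * w k)
      = -∑ k, d i k * (-2 * w k)) :
    ∑ j, H i j * v j = ∑ j, H i j * -∑ k, G j k * w k := by
  have hdw : ∑ k, d i k * w k =
      ∑ j, ∑ k, c i j k * w j * w k + ∑ j, H i j * ∑ k, G j k * w k := by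
    simp only [hd, sum_mul, mul_sum, ← sum_add_distrib]
    rw [sum_comm]
    exact sum_congr rfl fun _ _ => sum_congr rfl fun _ _ => by ring
  have hcww : ∑ j, ∑ k, c i j k * (-2 * w j) * (-2 * w k) =
      4 * ∑ j, ∑ k, c i j k * w j * w k := by
    simp only [mul_sum]
    exact sum_congr rfl fun _ _ => sum_congr rfl fun _ _ => by ring
  have hdw_neg_two : ∑ k, d i k * (-2 * w k) = -2 * ∑ k, d i k * w k := by
    rw [mul_sum]
    exact sum_congr rfl fun _ _ => by ring
  simp only [mul_neg, sum_neg_distrib]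
  linarith

theorem stmt5_general {n : ℕ}
    (G : (Fin n → ℝ) → Fin n → Fin n → ℝ)
    (hG : ∀ j k, ContDiff ℝ 1 (fun x => G x j k))
    (V : (Fin n → ℝ) → ℝ) (hV : ContDiff ℝ 2 V)
    (c : Fin n → Fin n → Fin n → ℝ)
    (hA1 : ∀ i j k x, pd (fun y => G y j k) i x = c i j k)
    (dm : Fin n → Fin n → ℝ)
    (hA2 : ∀ i k x, pd (fun y => ∑ j, G y j k * pd V j y) i x = dm i k)
    (hHess : ∀ x, Function.Injective
      (fun u : Fin n → ℝ => fun i => ∑ j, pd (fun y => pd V j y) i x * u j))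
    (φs dφs : ℝ → Fin n → ℝ)
    (hφs : ∀ i t, HasDerivAt (fun s => φs s i) (dφs t i) t)
    (hode : ∀ i t, dφs t i + (1/2) * ∑ j, ∑ k, c i j k * φs t j * φs t k
      = -∑ k, dm i k * φs t k)
    (ηs dηs : ℝ → Fin n → ℝ)
    (hηs : ∀ j t, HasDerivAt (fun s => ηs s j) (dηs t j) t)
    (hHC : ∀ i t, 2 * pd V i (ηs t) = -φs t i) :
    ∀ j t, dηs t j = -∑ k, G (ηs t) j k * pd V k (ηs t) := by
  intro j t
  have hpdV : ∀ k, Differentiable ℝ (pd V k) := fun k => (hV.pd k).differentiable one_ne_zero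
  have hφ : ∀ k s, φs s k = -2 * pd V k (ηs s) := fun k s => by linarith [hHC k s]
  have hdφ : ∀ i, dφs t i = -2 * ∑ k, pd (pd V k) i (ηs t) * dηs t k := by
    intro i
    have h := (HasDerivAt.pd_comp (hpdV i (ηs t)) (hasDerivAt_pi.2 (hηs · t))).const_mul (-2)
    simp only [← hφ, fun k => pd_pd_comm hV (ηs t) k i, mul_comm (dηs t _)] at h
    exact (hφs i t).unique h
  have hdm : ∀ i k, dm i k =
      ∑ j, (c i j k * pd V j (ηs t) + G (ηs t) j k * pd (pd V j) i (ηs t)) := by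
    intro i k
    rw [← hA2 i k (ηs t),
      pd_sum_mul (fun j => (hG j k).differentiable one_ne_zero _) (fun j => hpdV j _)]
    simp only [hA1]
  have hflow : dηs t = fun j => -∑ k, G (ηs t) j k * pd V k (ηs t) :=
    hHess (ηs t) <| funext fun i =>
      sum_mul_eq_sum_mul_neg_sum_of_riccati c dm (fun i j => pd (pd V j) i (ηs t)) (G (ηs t))
        (fun k => pd V k (ηs t)) (dηs t) i (hdm i) <| by
        simpa only [hφ, hdφ] using hode i t
  exact congrFun hflow j

/-- Geometric Hopf–Cole, backward part: under assumptions (A1),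
(A2) and injectivity of the Hessian of `V`, if `φ*` solves the sign-reversed
coordinate Euler–Lagrange equation and `η*` satisfies `2 ∂ᵢV(η*) = −φ*ᵢ`, then
`η*` is a backward gradient flow of `V`: `η*'ʲ = −Σₖ G^{jk}(η*) ∂ₖV(η*)`. -/
theorem stmt5 {n : ℕ} (hn : 1 ≤ n)
    (G : (Fin n → ℝ) → Fin n → Fin n → ℝ)
    (hG : ∀ j k, ContDiff ℝ 1 (fun x => G x j k))
    (hGsymm : ∀ x j k, G x j k = G x k j)
    (V : (Fin n → ℝ) → ℝ) (hV : ContDiff ℝ 2 V)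
    (c : Fin n → Fin n → Fin n → ℝ)
    (hA1 : ∀ i j k x, pd (fun y => G y j k) i x = c i j k)
    (dm : Fin n → Fin n → ℝ)
    (hA2 : ∀ i k x, pd (fun y => ∑ j, G y j k * pd V j y) i x = dm i k)
    (hHess : ∀ x, Function.Injective
      (fun u : Fin n → ℝ => fun i => ∑ j, pd (fun y => pd V j y) i x * u j))
    (φs dφs : ℝ → Fin n → ℝ)
    (hφs : ∀ i t, HasDerivAt (fun s => φs s i) (dφs t i) t)
    (hode : ∀ i t, dφs t i + (1/2) * ∑ j, ∑ k, c i j k * φs t j * φs t k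
      = -∑ k, dm i k * φs t k)
    (ηs dηs : ℝ → Fin n → ℝ)
    (hηs : ∀ j t, HasDerivAt (fun s => ηs s j) (dηs t j) t)
    (hHC : ∀ i t, 2 * pd V i (ηs t) = -φs t i) :
    ∀ j t, dηs t j = -∑ k, G (ηs t) j k * pd V k (ηs t) :=
  stmt5_general G hG V hV c hA1 dm hA2 hHess φs dφs hφs hode ηs dηs hηs hHC
end

section
/- (Coordinate form of the Euler–Lagrange equations of the optimal control problem.) Let n ≥ 1, let g : ℝⁿ → Matrix (Fin n) (Fin n) ℝ be a C² map such that g(x) is symmetric and invertible for every x, let G(x) := g(x)⁻¹, define the Christoffel symbols Γ^k_{ij}(x) := (1/2) Σₗ G^{kℓ}(x) (∂ᵢ g_{jℓ}(x) + ∂ⱼ g_{iℓ}(x) − ∂ₗ g_{ij}(x)) and W^k(x) := Σₗ G^{kℓ}(x) ∂ₗV(x), where V : ℝⁿ → ℝ is C². Suppose q, b : ℝ → ℝⁿ are differentiable and satisfy, for all t: q'ʲ(t) = bʲ(t) − Wʲ(q(t)) and b'ᵏ(t) + Σ_{i,j} Γ^k_{ij}(q(t)) q'ⁱ(t) bʲ(t)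 = Σᵢ bⁱ(t) ∂ᵢWᵏ(q(t)) + Σ_{i,j} Γ^k_{ij}(q(t)) bⁱ(t) Wʲ(q(t)). Then the covector φᵢ(t) := Σⱼ g_{ij}(q(t)) bʲ(t) satisfies φ'ᵢ(t) + (1/2) Σ_{j,k} ∂ᵢG^{jk}(q(t)) φⱼ(t) φₖ(t) = Σₖ ∂ᵢ(Σⱼ G^{jk} ∂ⱼV)(q(t)) φₖ(t) for all i and t. -/
/-- Inverse metric tensor `G = g⁻¹`. -/
noncomputable def Ginv {n : ℕ} (g : (Fin n → ℝ) → Matrix (Fin n) (Fin n) ℝ)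
    (x : Fin n → ℝ) : Matrix (Fin n) (Fin n) ℝ :=
  (g x)⁻¹

/-- Christoffel symbols of the second kind of the metric `g`:
`Γ^k_{ij} = (1/2) Σₗ G^{kℓ} (∂ᵢg_{jℓ} + ∂ⱼg_{iℓ} − ∂ₗg_{ij})`. -/
noncomputable def Gamma {n : ℕ} (g : (Fin n → ℝ) → Matrix (Fin n) (Fin n) ℝ)
    (k i j : Fin n) (x : Fin n → ℝ) : ℝ :=
  (1/2) * ∑ l, Ginv g x k l *
    (pd (fun y => g y j l) i x + pd (fun y => g y i l) j x - pd (fun y => g y i j) l x)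

/-- Components of the gradient vector field `∇V`: `W^k = Σₗ G^{kℓ} ∂ₗV`. -/
noncomputable def Wgrad {n : ℕ} (g : (Fin n → ℝ) → Matrix (Fin n) (Fin n) ℝ)
    (V : (Fin n → ℝ) → ℝ) (k : Fin n) (x : Fin n → ℝ) : ℝ :=
  ∑ l, Ginv g x k l * pd V l x

/-!
Differentiating `φᵢ = g_{ij}(q) bʲ` gives `φ'ᵢ = ∂ₗg_{ij} q'ˡ bʲ + g_{ij} b'ʲ`. Lowering the
Euler–Lagrange equation with `g` turns `Γ^k_{ac}` into the Christoffel symbols of the first kind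
and `g_{jk} ∂ₐWᵏ` into `∂ₐ∂ⱼV − ∂ₐg_{jk} Wᵏ` (differentiate `g W = dV`). On the other side,
`g (∂ᵢG) g = −∂ᵢg` (differentiate `G g = 1`), so the quadratic term is `−½ ∂ᵢg_{ac} bᵃ bᶜ`.
After substituting `q' = b − W` everything reduces to an identity between double sums over
`(a, c)`, which holds once the summands are symmetrized in `a ↔ c`, by the symmetry of `g` and of
the Hessian of `V`.
-/

open Matrix

section PartialDerivative

variable {n : ℕ}

lemma pd_const (c : ℝ) (i : Fin n) (x : Fin n → ℝ) : pd (fun _ => c) i x = 0 := by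
  simp [pd]

lemma pd_sum {ι : Type*} (s : Finset ι) (F : ι → (Fin n → ℝ) → ℝ) (i : Fin n) (x : Fin n → ℝ)
    (hF : ∀ j ∈ s, DifferentiableAt ℝ (F j) x) :
    pd (fun y => ∑ j ∈ s, F j y) i x = ∑ j ∈ s, pd (F j) i x := by
  simp [pd, fderiv_fun_sum hF]

lemma pd_mul (F H : (Fin n → ℝ) → ℝ) (i : Fin n) (x : Fin n → ℝ)
    (hF : DifferentiableAt ℝ F x) (hH : DifferentiableAt ℝ H x) :
    pd (fun y => F y * H y) i x = pd F i x * H x + F x * pd H i x := by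
  simp only [pd, fderiv_fun_mul hF hH, _root_.add_apply, _root_.smul_apply, smul_eq_mul]
  ring

lemma pd_pd_comm_s7 {V : (Fin n → ℝ) → ℝ} (hV : ContDiff ℝ 2 V) (a m : Fin n) (x : Fin n → ℝ) :
    pd (fun y => pd V a y) m x = pd (fun y => pd V m y) a x := by
  have hd : DifferentiableAt ℝ (fderiv ℝ V) x :=
    (hV.fderiv_right le_rfl).differentiable one_ne_zero x
  have hsymm : IsSymmSndFDerivAt ℝ V x :=
    hV.contDiffAt.isSymmSndFDerivAt (by simp [minSmoothness_of_isRCLikeNormedField])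
  simp only [pd, fderiv_clm_apply hd (differentiableAt_const _), fderiv_const_apply]
  simpa using hsymm (Pi.single m 1) (Pi.single a 1)

lemma hasDerivAt_comp_eq_sum_pd {F : (Fin n → ℝ) → ℝ} {q : ℝ → Fin n → ℝ} {dq : Fin n → ℝ}
    {t : ℝ} (hF : DifferentiableAt ℝ F (q t)) (hq : ∀ j, HasDerivAt (fun s => q s j) (dq j) t) :
    HasDerivAt (fun s => F (q s)) (∑ l, pd F l (q t) * dq l) t := by
  have h : HasDerivAt (fun s => F (q s)) (fderiv ℝ F (q t) dq) t :=
    hF.hasFDerivAt.comp_hasDerivAt t (hasDerivAt_pi.2 hq)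
  convert h using 1
  nth_rw 2 [← Finset.univ_sum_single dq]
  rw [map_sum]
  refine Finset.sum_congr rfl fun l _ => ?_
  rw [pd, mul_comm, ← smul_eq_mul, ← map_smul, ← Pi.single_smul', smul_eq_mul, mul_one]

end PartialDerivative

section Smoothness

variable {n : ℕ} {m : WithTop ℕ∞}

lemma contDiff_det {M : (Fin n → ℝ) → Matrix (Fin n) (Fin n) ℝ}
    (hM : ∀ i j, ContDiff ℝ m fun x => M x i j) : ContDiff ℝ m fun x => (M x).det := by
  simp only [det_apply']
  exact ContDiff.sum fun σ _ => contDiff_const.mul (contDiff_prod fun i _ => hM (σ i) i)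

lemma contDiff_ginv {g : (Fin n → ℝ) → Matrix (Fin n) (Fin n) ℝ}
    (hg : ∀ i j, ContDiff ℝ m fun x => g x i j) (hdet : ∀ x, IsUnit (g x).det) (j k : Fin n) :
    ContDiff ℝ m fun x => Ginv g x j k := by
  have hadj : ContDiff ℝ m fun x => (g x).adjugate j k := by
    simp only [adjugate_apply]
    refine contDiff_det fun a c => ?_
    by_cases hak : a = k
    · simp only [updateRow_apply, hak, if_true]
      exact contDiff_const
    · simpa only [updateRow_apply, hak, if_false] using hg a c
  simp only [Ginv, Matrix.inv_def, Matrix.smul_apply, smul_eq_mul, Ring.inverse_eq_inv]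
  exact ((contDiff_det hg).fun_inv fun x => (hdet x).ne_zero).mul hadj

end Smoothness

section Algebra

variable {n : ℕ}

/-- With `D d = ∂_d g`, this is `Γ_{i,ac} = ½ (∂ₐg_{ci} + ∂_c g_{ai} − ∂ᵢg_{ac})`. -/
noncomputable def christoffelFirst (D : Fin n → Matrix (Fin n) (Fin n) ℝ) (i a c : Fin n) : ℝ :=
  (1/2) * (D a c i + D c a i - D i a c)

lemma sum_sum_mul_mul_eq_dotProduct_mulVec {ι : Type*} [Fintype ι] (A : Matrix ι ι ℝ)
    (u v : ι → ℝ) : ∑ j, ∑ k, A j k * u j * v k = u ⬝ᵥ (A *ᵥ v) := by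
  simp only [dotProduct, mulVec, Finset.mul_sum]
  exact Finset.sum_congr rfl fun j _ => Finset.sum_congr rfl fun k _ => by ring

lemma Matrix.IsSymm.mulVec_dotProduct {ι : Type*} [Fintype ι] {A : Matrix ι ι ℝ} (hA : A.IsSymm)
    (u v : ι → ℝ) : (A *ᵥ u) ⬝ᵥ v = u ⬝ᵥ (A *ᵥ v) := by
  rw [dotProduct_mulVec, ← mulVec_transpose, hA.eq, dotProduct_comm]

lemma sum_sum_eq_of_add_swap {ι : Type*} [Fintype ι] {f h : ι → ι → ℝ}
    (hfh : ∀ a c, f a c + f c a = h a c + h c a) :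
    ∑ a, ∑ c, f a c = ∑ a, ∑ c, h a c := by
  have hsymm : ∀ u : ι → ι → ℝ, 2 * ∑ a, ∑ c, u a c = ∑ a, ∑ c, (u a c + u c a) := fun u => by
    rw [two_mul]
    nth_rw 2 [Finset.sum_comm]
    simp only [Finset.sum_add_distrib]
  have := hsymm f
  rw [Finset.sum_congr rfl fun a _ => Finset.sum_congr rfl fun c _ => hfh a c, ← hsymm h] at this
  linarith

lemma christoffelFirst_euler_lagrange_identity (D : Fin n → Matrix (Fin n) (Fin n) ℝ)
    (hD : ∀ d, (D d).IsSymm) (H : Matrix (Fin n) (Fin n) ℝ) (hH : H.IsSymm)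
    (B W : Fin n → ℝ) (i : Fin n) :
    (∑ j, (∑ l, D l i j * (B l - W l)) * B j)
      + ((∑ a, B a * (H i a - ∑ j, D a i j * W j))
        + ∑ a, ∑ c, christoffelFirst D i a c * (B a * W c - (B a - W a) * B c))
    = ∑ l, B l * (H l i - ∑ j, D i l j * W j) - (1/2) * -(∑ a, ∑ c, D i a c * B a * B c) := by
  have e1 : ∑ j, (∑ l, D l i j * (B l - W l)) * B j = ∑ a, ∑ c, D a i c * (B a - W a) * B c := by
    simp only [Finset.sum_mul]
    exact Finset.sum_comm
  have e2 : ∑ a, B a * (H i a - ∑ j, D a i j * W j)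
      = ∑ a, B a * H i a - ∑ a, ∑ c, B a * D a i c * W c := by
    simp only [mul_sub, Finset.sum_sub_distrib, Finset.mul_sum, mul_assoc]
  have e3 : ∑ l, B l * (H l i - ∑ j, D i l j * W j)
      = ∑ a, B a * H i a - ∑ a, ∑ c, B a * D i a c * W c := by
    simp only [mul_sub, Finset.sum_sub_distrib, Finset.mul_sum, mul_assoc, hH.apply i]
  have e4 : (1/2) * -(∑ a, ∑ c, D i a c * B a * B c)
      = -∑ a, ∑ c, (1/2) * (D i a c * B a * B c) := by
    simp only [mul_neg, Finset.mul_sum]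
  have hpair := sum_sum_eq_of_add_swap
    (f := fun a c => D a i c * (B a - W a) * B c - B a * D a i c * W c
      + christoffelFirst D i a c * (B a * W c - (B a - W a) * B c))
    (h := fun a c => (1/2) * (D i a c * B a * B c) - B a * D i a c * W c) fun a c => by
      simp only [christoffelFirst, (hD a).apply i c, (hD c).apply i a, (hD i).apply a c]
      ring
  simp only [Finset.sum_add_distrib, Finset.sum_sub_distrib] at hpair
  rw [e1, e2, e3, e4]
  linarith

end Algebra

section Metric

variable {n : ℕ} {g : (Fin n → ℝ) → Matrix (Fin n) (Fin n) ℝ} {x : Fin n → ℝ}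

noncomputable def pdMatrix (F : (Fin n → ℝ) → Matrix (Fin n) (Fin n) ℝ) (i : Fin n)
    (x : Fin n → ℝ) : Matrix (Fin n) (Fin n) ℝ :=
  Matrix.of fun a c => pd (fun y => F y a c) i x

@[simp]
lemma pdMatrix_apply (F : (Fin n → ℝ) → Matrix (Fin n) (Fin n) ℝ) (i : Fin n) (a c : Fin n) :
    pdMatrix F i x a c = pd (fun y => F y a c) i x := rfl

lemma isSymm_pdMatrix (hg : ∀ y, (g y).IsSymm) (i : Fin n) : (pdMatrix g i x).IsSymm := by
  refine Matrix.IsSymm.ext fun a c => ?_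
  simp only [pdMatrix_apply, fun y => (hg y).apply a c]

lemma pdMatrix_mul {F H : (Fin n → ℝ) → Matrix (Fin n) (Fin n) ℝ}
    (hF : ∀ a c, DifferentiableAt ℝ (fun y => F y a c) x)
    (hH : ∀ a c, DifferentiableAt ℝ (fun y => H y a c) x) (i : Fin n) :
    pdMatrix (fun y => F y * H y) i x = pdMatrix F i x * H x + F x * pdMatrix H i x := by
  ext a c
  simp only [pdMatrix_apply, Matrix.add_apply, Matrix.mul_apply, ← Finset.sum_add_distrib]
  rw [pd_sum _ _ _ _ fun m _ => (hF a m).fun_mul (hH m c)]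
  exact Finset.sum_congr rfl fun m _ => pd_mul _ _ _ _ (hF a m) (hH m c)

lemma metric_mul_pdMatrix_ginv_mul_metric (hdet : ∀ y, IsUnit (g y).det)
    (hg : ∀ a c, DifferentiableAt ℝ (fun y => g y a c) x)
    (hG : ∀ a c, DifferentiableAt ℝ (fun y => Ginv g y a c) x) (i : Fin n) :
    g x * pdMatrix (Ginv g) i x * g x = -pdMatrix g i x := by
  have hzero : pdMatrix (fun y => Ginv g y * g y) i x = 0 := by
    ext a c
    simp [Ginv, Matrix.nonsing_inv_mul _ (hdet _), Matrix.one_apply, pd_const]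
  rw [pdMatrix_mul hG hg, add_eq_zero_iff_eq_neg] at hzero
  rw [Matrix.mul_assoc, hzero, Matrix.mul_neg, ← Matrix.mul_assoc, Ginv,
    Matrix.mul_nonsing_inv _ (hdet x), Matrix.one_mul]

lemma sum_mul_sum_ginv_mul (hdet : IsUnit (g x).det) (v : Fin n → ℝ) (a : Fin n) :
    ∑ k, g x a k * ∑ l, Ginv g x k l * v l = v a := by
  change (g x *ᵥ (Ginv g x *ᵥ v)) a = v a
  rw [Matrix.mulVec_mulVec, Ginv, Matrix.mul_nonsing_inv _ hdet, Matrix.one_mulVec]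

lemma sum_mul_gamma (hdet : IsUnit (g x).det) (i a c : Fin n) :
    ∑ k, g x i k * Gamma g k a c x = christoffelFirst (fun d => pdMatrix g d x) i a c := by
  simp only [Gamma, mul_left_comm _ (1/2 : ℝ), ← Finset.mul_sum, christoffelFirst, pdMatrix_apply]
  rw [sum_mul_sum_ginv_mul hdet]

lemma sum_mul_wgrad (hdet : IsUnit (g x).det) (V : (Fin n → ℝ) → ℝ) (a : Fin n) :
    ∑ k, g x a k * Wgrad g V k x = pd V a x :=
  sum_mul_sum_ginv_mul hdet (fun l => pd V l x) a

lemma differentiable_wgrad (hg : ∀ i j, ContDiff ℝ 1 fun y => g y i j)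
    (hdet : ∀ y, IsUnit (g y).det) {V : (Fin n → ℝ) → ℝ} (hV : ContDiff ℝ 2 V) (k : Fin n) :
    Differentiable ℝ fun y => Wgrad g V k y := by
  have hpdV : ∀ l, ContDiff ℝ 1 fun y => pd V l y := fun l =>
    (hV.fderiv_right le_rfl).clm_apply contDiff_const
  exact Differentiable.fun_sum fun l _ =>
    ((contDiff_ginv hg hdet k l).differentiable one_ne_zero).mul
      ((hpdV l).differentiable one_ne_zero)

lemma sum_mul_pd_wgrad (hdet : ∀ y, IsUnit (g y).det)
    (hg : ∀ a c, DifferentiableAt ℝ (fun y => g y a c) x) {V : (Fin n → ℝ) → ℝ}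
    (hW : ∀ k, DifferentiableAt ℝ (fun y => Wgrad g V k y) x) (m p : Fin n) :
    ∑ k, g x p k * pd (fun y => Wgrad g V k y) m x
      = pd (fun y => pd V p y) m x - ∑ k, pdMatrix g m x p k * Wgrad g V k x := by
  have hpd : pd (fun y => ∑ k, g y p k * Wgrad g V k y) m x = pd (fun y => pd V p y) m x := by
    simp only [sum_mul_wgrad (hdet _)]
  rw [pd_sum _ _ _ _ fun k _ => (hg p k).fun_mul (hW k),
    Finset.sum_congr rfl fun k _ => pd_mul _ _ _ _ (hg p k) (hW k), Finset.sum_add_distrib] at hpd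
  simp only [pdMatrix_apply]
  linarith

lemma sum_sum_pd_ginv_mul_mul (hsymm : (g x).IsSymm) (hdet : ∀ y, IsUnit (g y).det)
    (hg : ∀ a c, DifferentiableAt ℝ (fun y => g y a c) x)
    (hG : ∀ a c, DifferentiableAt ℝ (fun y => Ginv g y a c) x) (i : Fin n) (b : Fin n → ℝ) :
    ∑ j, ∑ k, pd (fun y => Ginv g y j k) i x * (∑ l, g x j l * b l) * (∑ l, g x k l * b l)
      = -∑ a, ∑ c, pdMatrix g i x a c * b a * b c :=
  calc _ = (g x *ᵥ b) ⬝ᵥ (pdMatrix (Ginv g) i x *ᵥ (g x *ᵥ b)) :=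
        sum_sum_mul_mul_eq_dotProduct_mulVec _ _ _
    _ = b ⬝ᵥ ((g x * pdMatrix (Ginv g) i x * g x) *ᵥ b) := by
        rw [hsymm.mulVec_dotProduct, mulVec_mulVec, mulVec_mulVec, Matrix.mul_assoc]
    _ = _ := by
        rw [metric_mul_pdMatrix_ginv_mul_metric hdet hg hG, neg_mulVec, dotProduct_neg,
          sum_sum_mul_mul_eq_dotProduct_mulVec]

lemma sum_pd_sum_ginv_mul_pd_mul (hsymm : ∀ y, (g y).IsSymm) (hdet : ∀ y, IsUnit (g y).det)
    (hg : ∀ a c, DifferentiableAt ℝ (fun y => g y a c) x) {V : (Fin n → ℝ) → ℝ}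
    (hW : ∀ k, DifferentiableAt ℝ (fun y => Wgrad g V k y) x) (i : Fin n) (b : Fin n → ℝ) :
    ∑ k, pd (fun y => ∑ j, Ginv g y j k * pd V j y) i x * (∑ j, g x k j * b j)
      = ∑ l, b l * (pd (fun y => pd V l y) i x - ∑ j, pdMatrix g i x l j * Wgrad g V j x) := by
  have hWgrad : ∀ k, (fun y => ∑ j, Ginv g y j k * pd V j y) = fun y => Wgrad g V k y :=
    fun k => funext fun y => Finset.sum_congr rfl fun j _ => by rw [Ginv, (hsymm y).inv.apply]
  simp only [hWgrad, ← sum_mul_pd_wgrad hdet hg hW]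
  change (fun k => pd (fun y => Wgrad g V k y) i x) ⬝ᵥ (g x *ᵥ b)
    = b ⬝ᵥ (g x *ᵥ fun k => pd (fun y => Wgrad g V k y) i x)
  rw [dotProduct_comm, (hsymm x).mulVec_dotProduct]

lemma sum_mul_eq_of_euler_lagrange (hdet : ∀ y, IsUnit (g y).det)
    (hg : ∀ a c, DifferentiableAt ℝ (fun y => g y a c) x) {V : (Fin n → ℝ) → ℝ}
    (hW : ∀ k, DifferentiableAt ℝ (fun y => Wgrad g V k y) x) (B dB dQ : Fin n → ℝ)
    (hEL : ∀ k, dB k + ∑ a, ∑ c, Gamma g k a c x * dQ a * B c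
      = (∑ a, B a * pd (fun y => Wgrad g V k y) a x)
        + ∑ a, ∑ c, Gamma g k a c x * B a * Wgrad g V c x) (i : Fin n) :
    ∑ j, g x i j * dB j
      = ∑ a, B a * (pd (fun y => pd V i y) a x - ∑ j, pdMatrix g a x i j * Wgrad g V j x)
        + ∑ a, ∑ c, christoffelFirst (fun d => pdMatrix g d x) i a c
          * (B a * Wgrad g V c x - dQ a * B c) := by
  have hdB : ∀ k, dB k = ∑ a, B a * pd (fun y => Wgrad g V k y) a x
      + ∑ a, ∑ c, Gamma g k a c x * (B a * Wgrad g V c x - dQ a * B c) := by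
    intro k
    simp only [mul_sub, Finset.sum_sub_distrib, ← mul_assoc]
    linarith [hEL k]
  simp only [hdB, mul_add, Finset.sum_add_distrib, ← sum_mul_pd_wgrad hdet hg hW,
    ← sum_mul_gamma (hdet x), Finset.mul_sum, Finset.sum_mul]
  congr 1
  · rw [Finset.sum_comm]
    exact Finset.sum_congr rfl fun a _ => Finset.sum_congr rfl fun j _ => by ring
  · rw [Finset.sum_comm]
    refine Finset.sum_congr rfl fun a _ => ?_
    rw [Finset.sum_comm]
    exact Finset.sum_congr rfl fun c _ => Finset.sum_congr rfl fun j _ => by ring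

end Metric

theorem stmt7_general {n : ℕ}
    (g : (Fin n → ℝ) → Matrix (Fin n) (Fin n) ℝ)
    (hg : ∀ i j, ContDiff ℝ 2 (fun x => g x i j))
    (hgsymm : ∀ x, (g x).IsSymm)
    (hginv : ∀ x, IsUnit (g x).det)
    (V : (Fin n → ℝ) → ℝ) (hV : ContDiff ℝ 2 V)
    (q dq b db : ℝ → Fin n → ℝ)
    (hq : ∀ j t, HasDerivAt (fun s => q s j) (dq t j) t)
    (hb : ∀ k t, HasDerivAt (fun s => b s k) (db t k) t)
    (hconstr : ∀ j t, dq t j = b t j - Wgrad g V j (q t))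
    (hEL : ∀ k t, db t k + ∑ i, ∑ j, Gamma g k i j (q t) * dq t i * b t j
      = (∑ i, b t i * pd (fun y => Wgrad g V k y) i (q t))
        + ∑ i, ∑ j, Gamma g k i j (q t) * b t i * Wgrad g V j (q t)) :
    ∀ i t, HasDerivAt (fun s => ∑ j, g (q s) i j * b s j)
      ((∑ k, pd (fun y => ∑ j, Ginv g y j k * pd V j y) i (q t)
          * (∑ j, g (q t) k j * b t j))
        - (1/2) * ∑ j, ∑ k, pd (fun y => Ginv g y j k) i (q t)
          * (∑ l, g (q t) j l * b t l) * (∑ l, g (q t) k l * b t l)) t := by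
  intro i t
  have hg1 : ∀ a c, ContDiff ℝ 1 fun y => g y a c := fun a c => (hg a c).of_le one_le_two
  have hgd : ∀ a c, DifferentiableAt ℝ (fun y => g y a c) (q t) :=
    fun a c => (hg1 a c).differentiable one_ne_zero _
  have hGd : ∀ a c, DifferentiableAt ℝ (fun y => Ginv g y a c) (q t) :=
    fun a c => (contDiff_ginv hg1 hginv a c).differentiable one_ne_zero _
  have hWd : ∀ k, DifferentiableAt ℝ (fun y => Wgrad g V k y) (q t) :=
    fun k => differentiable_wgrad hg1 hginv hV k _
  have hφ : HasDerivAt (fun s => ∑ j, g (q s) i j * b s j)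
      (∑ j, ((∑ l, pdMatrix g l (q t) i j * dq t l) * b t j + g (q t) i j * db t j)) t :=
    HasDerivAt.fun_sum fun j _ =>
      (hasDerivAt_comp_eq_sum_pd (hgd i j) fun l => hq l t).mul (hb j t)
  convert hφ using 1
  rw [sum_pd_sum_ginv_mul_pd_mul hgsymm hginv hgd hWd,
    sum_sum_pd_ginv_mul_mul (hgsymm _) hginv hgd hGd, Finset.sum_add_distrib,
    sum_mul_eq_of_euler_lagrange hginv hgd hWd _ _ _ fun k => hEL k t]
  simp only [hconstr]
  exact (christoffelFirst_euler_lagrange_identity _ (fun d => isSymm_pdMatrix hgsymm d)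
    (H := .of fun p r => pd (fun y => pd V p y) r (q t))
    (.ext fun p r => pd_pd_comm_s7 hV r p (q t)) _ _ i).symm

/-- Coordinate form of the Euler–Lagrange equations of the
optimal control problem: if `(q, b)` satisfies `q'ʲ = bʲ − Wʲ(q)` and the
covariant Euler–Lagrange equation `D_t b = ∇_b ∇V` written in coordinates,
then the covector `φᵢ = g_{ij}(q) bʲ` satisfies
`φ'ᵢ + (1/2) ∂ᵢG^{jk}(q) φⱼφₖ = ∂ᵢ(G^{jk}∂ⱼV)(q) φₖ`. -/
theorem stmt7 {n : ℕ} (hn : 1 ≤ n)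
    (g : (Fin n → ℝ) → Matrix (Fin n) (Fin n) ℝ)
    (hg : ∀ i j, ContDiff ℝ 2 (fun x => g x i j))
    (hgsymm : ∀ x, (g x).IsSymm)
    (hginv : ∀ x, IsUnit (g x).det)
    (V : (Fin n → ℝ) → ℝ) (hV : ContDiff ℝ 2 V)
    (q dq b db : ℝ → Fin n → ℝ)
    (hq : ∀ j t, HasDerivAt (fun s => q s j) (dq t j) t)
    (hb : ∀ k t, HasDerivAt (fun s => b s k) (db t k) t)
    (hconstr : ∀ j t, dq t j = b t j - Wgrad g V j (q t))
    (hEL : ∀ k t, db t k + ∑ i, ∑ j, Gamma g k i j (q t) * dq t i * b t j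
      = (∑ i, b t i * pd (fun y => Wgrad g V k y) i (q t))
        + ∑ i, ∑ j, Gamma g k i j (q t) * b t i * Wgrad g V j (q t)) :
    ∀ i t, HasDerivAt (fun s => ∑ j, g (q s) i j * b s j)
      ((∑ k, pd (fun y => ∑ j, Ginv g y j k * pd V j y) i (q t)
          * (∑ j, g (q t) k j * b t j))
        - (1/2) * ∑ j, ∑ k, pd (fun y => Ginv g y j k) i (q t)
          * (∑ l, g (q t) j l * b t l) * (∑ l, g (q t) k l * b t l)) t :=
  stmt7_general g hg hgsymm hginv V hV q dq b db hq hb hconstr hEL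
end

section
/- (Hopf–Cole for the Yasue problem.) Let γ > 0, d ≥ 1, and let ρ, ψ : ℝ × ℝᵈ → ℝ be C² with ρ(t,x) > 0 for all (t,x). Suppose that everywhere on ℝ × ℝᵈ: ∂ₜψ + (1/2)‖∇ₓψ‖² = −2γ² Δₓ(√ρ)/√ρ and ∂ₜρ + divₓ(ρ ∇ₓψ) = 0. Then η(t,x) := √(ρ(t,x)) exp(ψ(t,x)/(2γ)) satisfies the backward heat equation ∂ₜη = −γ Δₓη, and η*(t,x) := √(ρ(t,x)) exp(−ψ(t,x)/(2γ)) satisfies the forward heat equation ∂ₜη* = γ Δₓη*, everywhere on ℝ × ℝᵈ. -/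
/-- Time derivative `∂ₜF` of `F : ℝ × ℝᵈ → ℝ`. -/
noncomputable def pt {d : ℕ} (F : ℝ × (Fin d → ℝ) → ℝ) (p : ℝ × (Fin d → ℝ)) : ℝ :=
  fderiv ℝ F p (1, 0)

/-- Spatial partial derivative `∂ᵢF` of `F : ℝ × ℝᵈ → ℝ` in the `i`-th
coordinate direction. -/
noncomputable def px {d : ℕ} (F : ℝ × (Fin d → ℝ) → ℝ) (i : Fin d)
    (p : ℝ × (Fin d → ℝ)) : ℝ :=
  fderiv ℝ F p (0, Pi.single i 1)

/-!
With `A = √ρ`, the continuity equation becomes `∂ₜA + ∇A·∇ψ + (A/2)Δψ = 0` and the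
Hamilton–Jacobi equation becomes `A (∂ₜψ + ½‖∇ψ‖²) = −2γ² ΔA`. For `η = A e^{cψ}`,
`∂ₜη = (∂ₜA + c A ∂ₜψ) e^{cψ}` and `Δη = (ΔA + 2c ∇A·∇ψ + c A Δψ + c² A ‖∇ψ‖²) e^{cψ}`,
so whenever `(2γc)² = 1` the two equations combine to `∂ₜη = −2γ²c Δη`;
`c = ±1/(2γ)` gives the backward and the forward heat equation.
-/

open Real

section Calculus

variable {E : Type*} [NormedAddCommGroup E] [NormedSpace ℝ E]

lemma ContDiff.differentiable_fderiv_apply {f : E → ℝ} (hf : ContDiff ℝ 2 f) (v : E) :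
    Differentiable ℝ (fun p => fderiv ℝ f p v) :=
  ((hf.fderiv_right (m := 1) le_rfl).clm_apply contDiff_const).differentiable one_ne_zero

lemma fderiv_mul_apply {f g : E → ℝ} {p : E} (hf : DifferentiableAt ℝ f p)
    (hg : DifferentiableAt ℝ g p) (v : E) :
    fderiv ℝ (fun q => f q * g q) p v = fderiv ℝ f p v * g p + f p * fderiv ℝ g p v := by
  rw [fderiv_fun_mul hf hg]
  simp only [add_apply, smul_apply, smul_eq_mul]
  ring

lemma fderiv_apply_eq_two_mul_sqrt_mul {ρ : E → ℝ} {p : E} (hρ : DifferentiableAt ℝ ρ p)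
    (hpos : 0 < ρ p) (v : E) :
    fderiv ℝ ρ p v = 2 * √(ρ p) * fderiv ℝ (fun q => √(ρ q)) p v := by
  rw [fderiv_sqrt hρ hpos.ne']
  simp only [smul_apply, smul_eq_mul]
  field_simp [(sqrt_pos.2 hpos).ne']

lemma fderiv_mul_exp_mul_apply {A ψ : E → ℝ} {p : E} (hA : DifferentiableAt ℝ A p)
    (hψ : DifferentiableAt ℝ ψ p) (c : ℝ) (v : E) :
    fderiv ℝ (fun q => A q * exp (ψ q * c)) p v
      = (fderiv ℝ A p v + c * A p * fderiv ℝ ψ p v) * exp (ψ p * c) := by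
  rw [(hA.hasFDerivAt.fun_mul (hψ.hasFDerivAt.mul_const c).exp).fderiv]
  simp only [add_apply, smul_apply, smul_eq_mul]
  ring

lemma fderiv_fderiv_mul_exp_mul_apply {A ψ : E → ℝ} (hA : ContDiff ℝ 2 A)
    (hψ : ContDiff ℝ 2 ψ) (c : ℝ) (p v : E) :
    fderiv ℝ (fun q => fderiv ℝ (fun q => A q * exp (ψ q * c)) q v) p v
      = (fderiv ℝ (fun q => fderiv ℝ A q v) p v + 2 * c * fderiv ℝ A p v * fderiv ℝ ψ p v
          + c * A p * fderiv ℝ (fun q => fderiv ℝ ψ q v) p v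
          + c ^ 2 * A p * fderiv ℝ ψ p v ^ 2) * exp (ψ p * c) := by
  have hA1 := hA.differentiable two_ne_zero
  have hψ1 := hψ.differentiable two_ne_zero
  have hDA := (hA.differentiable_fderiv_apply v p).hasFDerivAt
  have hDψ := (hψ.differentiable_fderiv_apply v p).hasFDerivAt
  have hfirst : (fun q => fderiv ℝ (fun q => A q * exp (ψ q * c)) q v)
      = fun q => (fderiv ℝ A q v + c * A q * fderiv ℝ ψ q v) * exp (ψ q * c) :=
    funext fun q => fderiv_mul_exp_mul_apply (hA1 q) (hψ1 q) c v
  rw [hfirst, ((hDA.fun_add (((hA1 p).hasFDerivAt.const_mul c).fun_mul hDψ)).fun_mul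
    ((hψ1 p).hasFDerivAt.mul_const c).exp).fderiv]
  simp only [add_apply, smul_apply, smul_eq_mul]
  ring

end Calculus

section HopfCole

variable {d : ℕ}

lemma sqrt_transport_of_continuity {ρ ψ : ℝ × (Fin d → ℝ) → ℝ} (hρ : ContDiff ℝ 2 ρ)
    (hψ : ContDiff ℝ 2 ψ) (hpos : ∀ p, 0 < ρ p)
    (hcont : ∀ p, pt ρ p + ∑ i, px (fun q => ρ q * px ψ i q) i p = 0) (p : ℝ × (Fin d → ℝ)) :
    pt (fun q => √(ρ q)) p + ∑ i, px (fun q => √(ρ q)) i p * px ψ i p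
      + √(ρ p) / 2 * ∑ i, px (px ψ i) i p = 0 := by
  have hρ1 := hρ.differentiable two_ne_zero p
  have hsqrt_pos := sqrt_pos.2 (hpos p)
  have hpt : pt ρ p = 2 * √(ρ p) * pt (fun q => √(ρ q)) p :=
    fderiv_apply_eq_two_mul_sqrt_mul hρ1 (hpos p) _
  have hpx : ∀ i, px ρ i p = 2 * √(ρ p) * px (fun q => √(ρ q)) i p :=
    fun i => fderiv_apply_eq_two_mul_sqrt_mul hρ1 (hpos p) _
  have hdiv : ∀ i, px (fun q => ρ q * px ψ i q) i p
      = px ρ i p * px ψ i p + ρ p * px (px ψ i) i p :=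
    fun i => fderiv_mul_apply hρ1 (hψ.differentiable_fderiv_apply _ p) _
  have h := hcont p
  simp only [hdiv, hpx, hpt, Finset.sum_add_distrib, mul_assoc, ← Finset.mul_sum] at h
  apply mul_left_cancel₀ (mul_ne_zero two_ne_zero hsqrt_pos.ne')
  linear_combination h + (∑ i, px (px ψ i) i p) * sq_sqrt (hpos p).le

lemma heat_mul_exp_of_transport_of_hamiltonJacobi {γ c : ℝ} (hc : (2 * γ * c) ^ 2 = 1)
    {A ψ : ℝ × (Fin d → ℝ) → ℝ} (hA : ContDiff ℝ 2 A) (hψ : ContDiff ℝ 2 ψ)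
    (htransport : ∀ p, pt A p + ∑ i, px A i p * px ψ i p + A p / 2 * ∑ i, px (px ψ i) i p = 0)
    (hHJ : ∀ p, A p * (pt ψ p + 1 / 2 * ∑ i, px ψ i p ^ 2) = -2 * γ ^ 2 * ∑ i, px (px A i) i p)
    (p : ℝ × (Fin d → ℝ)) :
    pt (fun q => A q * exp (ψ q * c)) p
      = -2 * γ ^ 2 * c * ∑ i, px (px (fun q => A q * exp (ψ q * c)) i) i p := by
  have hlap : ∑ i, px (px (fun q => A q * exp (ψ q * c)) i) i p
      = (∑ i, px (px A i) i p + 2 * c * ∑ i, px A i p * px ψ i p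
        + c * A p * ∑ i, px (px ψ i) i p + c ^ 2 * A p * ∑ i, px ψ i p ^ 2) * exp (ψ p * c) := by
    unfold px
    simp only [fderiv_fderiv_mul_exp_mul_apply hA hψ, add_mul, Finset.mul_sum, Finset.sum_mul,
      ← Finset.sum_add_distrib]
    exact Finset.sum_congr rfl fun i _ => by ring
  have hpt : pt (fun q => A q * exp (ψ q * c)) p = (pt A p + c * A p * pt ψ p) * exp (ψ p * c) :=
    fderiv_mul_exp_mul_apply (hA.differentiable two_ne_zero p) (hψ.differentiable two_ne_zero p) c _
  rw [hpt, hlap]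
  linear_combination exp (ψ p * c) * (htransport p + c * hHJ p + (∑ i, px A i p * px ψ i p
    + A p / 2 * ∑ i, px (px ψ i) i p + c * A p / 2 * ∑ i, px ψ i p ^ 2) * hc)

end HopfCole

theorem stmt16_general (γ : ℝ) (hγ : 0 < γ) {d : ℕ}
    (ρ ψ : ℝ × (Fin d → ℝ) → ℝ) (hρ : ContDiff ℝ 2 ρ) (hψ : ContDiff ℝ 2 ψ)
    (hpos : ∀ p, 0 < ρ p)
    (hHJB : ∀ p, pt ψ p + (1/2) * ∑ i, (px ψ i p)^2
      = -2*γ^2 * (∑ i, px (px (fun q => Real.sqrt (ρ q)) i) i p) / Real.sqrt (ρ p))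
    (hcont : ∀ p, pt ρ p + ∑ i, px (fun q => ρ q * px ψ i q) i p = 0) :
    (∀ p, pt (fun q => Real.sqrt (ρ q) * Real.exp (ψ q / (2*γ))) p
        = -γ * ∑ i, px (px (fun q => Real.sqrt (ρ q) * Real.exp (ψ q / (2*γ))) i) i p)
    ∧ (∀ p, pt (fun q => Real.sqrt (ρ q) * Real.exp (-ψ q / (2*γ))) p
        = γ * ∑ i, px (px (fun q => Real.sqrt (ρ q) * Real.exp (-ψ q / (2*γ))) i) i p) := by
  have hsqrt : ContDiff ℝ 2 (fun q => √(ρ q)) := hρ.sqrt fun p => (hpos p).ne'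
  have hHJ : ∀ p, √(ρ p) * (pt ψ p + 1 / 2 * ∑ i, px ψ i p ^ 2)
      = -2 * γ ^ 2 * ∑ i, px (px (fun q => √(ρ q)) i) i p := fun p => by
    rw [hHJB p, mul_div_cancel₀ _ (sqrt_pos.2 (hpos p)).ne']
  have heat := fun c hc => heat_mul_exp_of_transport_of_hamiltonJacobi (γ := γ) (c := c) hc hsqrt
    hψ (sqrt_transport_of_continuity hρ hψ hpos hcont) hHJ
  constructor
  · intro p
    have h := heat (2 * γ)⁻¹ (by field_simp) p
    rw [show -2 * γ ^ 2 * (2 * γ)⁻¹ = -γ by field_simp] at h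
    simpa only [div_eq_mul_inv] using h
  · intro p
    have h := heat (-(2 * γ)⁻¹) (by field_simp) p
    rw [show -2 * γ ^ 2 * -(2 * γ)⁻¹ = γ by field_simp] at h
    simpa only [neg_div, div_eq_mul_inv, mul_neg, neg_mul] using h

/-- Hopf–Cole for the Yasue problem: if `ρ > 0` and `ψ` are C²
and solve `∂ₜψ + (1/2)‖∇ₓψ‖² = −2γ²Δₓ(√ρ)/√ρ` and the continuity equation
`∂ₜρ + divₓ(ρ∇ₓψ) = 0`, then `η = √ρ exp(ψ/(2γ))` solves the backward heat
equation and `η* = √ρ exp(−ψ/(2γ))` solves the forward heat equation. -/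
theorem stmt16 (γ : ℝ) (hγ : 0 < γ) {d : ℕ} (hd : 1 ≤ d)
    (ρ ψ : ℝ × (Fin d → ℝ) → ℝ) (hρ : ContDiff ℝ 2 ρ) (hψ : ContDiff ℝ 2 ψ)
    (hpos : ∀ p, 0 < ρ p)
    (hHJB : ∀ p, pt ψ p + (1/2) * ∑ i, (px ψ i p)^2
      = -2*γ^2 * (∑ i, px (px (fun q => Real.sqrt (ρ q)) i) i p) / Real.sqrt (ρ p))
    (hcont : ∀ p, pt ρ p + ∑ i, px (fun q => ρ q * px ψ i q) i p = 0) :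
    (∀ p, pt (fun q => Real.sqrt (ρ q) * Real.exp (ψ q / (2*γ))) p
        = -γ * ∑ i, px (px (fun q => Real.sqrt (ρ q) * Real.exp (ψ q / (2*γ))) i) i p)
    ∧ (∀ p, pt (fun q => Real.sqrt (ρ q) * Real.exp (-ψ q / (2*γ))) p
        = γ * ∑ i, px (px (fun q => Real.sqrt (ρ q) * Real.exp (-ψ q / (2*γ))) i) i p) :=
  stmt16_general γ hγ ρ ψ hρ hψ hpos hHJB hcont
end
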